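/- arXiv:2401.02182 — 2 statements merged into one kernel-verified Lean document; each statement's English description precedes it below -/
import Mathlib

section
/- Let k > −1 and m, M > 0 be real numbers. Then ∫₀^∞ v^{k−1/2} e^{−4πvM} erf(√(πv/m)) dv = (2/√m) · (Γ(k+1)/(4πM)^{k+1}) · F_k(−1/(4mM)). -/
noncomputable section

open Complex MeasureTheory Set
open scoped ComplexConjugate

/-- `e w = exp (2 π i w)`. -/
def e (w : ℂ) : ℂ := Complex.exp (2 * (Real.pi : ℂ) * Complex.I * w)

/-- The monomial `q^n ζ^r`, i.e. `(τ, z) ↦ e^{2πi(nτ + rz)}`. -/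
def Qmon (n : ℕ) (r : ℤ) (τ z : ℂ) : ℂ := e ((n : ℂ) * τ + (r : ℂ) * z)

/-- `σ₁(n)`, the sum of the positive divisors of `n`. -/
def sigma1 (n : ℕ) : ℕ := ∑ d ∈ n.divisors, d

/-- The weight-2 Eisenstein series `E₂(τ) = 1 - 24 ∑_{n ≥ 1} σ₁(n) e^{2πinτ}`. -/
def E2 (τ : ℂ) : ℂ := 1 - 24 * ∑' n : ℕ, (sigma1 (n + 1) : ℂ) * e (((n : ℂ) + 1) * τ)

/-- The deformed Eisenstein series
`J₁(τ,z) = ζ/(ζ-1) - 1/2 - ∑_{a,b ≥ 1} (ζ^a - ζ^{-a}) q^{ab}`. -/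
def J1 (τ z : ℂ) : ℂ :=
  e z / (e z - 1) - 1 / 2 -
    ∑' p : ℕ × ℕ, (e (((p.1 : ℂ) + 1) * z) - e (-(((p.1 : ℂ) + 1) * z))) *
      e (((p.1 : ℂ) + 1) * ((p.2 : ℂ) + 1) * τ)

/-- The deformed Eisenstein series
`J₂(τ,z) = 1/6 - 2 ∑_{a,b ≥ 1} b (ζ^a + ζ^{-a}) q^{ab}`. -/
def J2 (τ z : ℂ) : ℂ :=
  1 / 6 - 2 * ∑' p : ℕ × ℕ, ((p.2 : ℂ) + 1) *
      (e (((p.1 : ℂ) + 1) * z) + e (-(((p.1 : ℂ) + 1) * z))) *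
      e (((p.1 : ℂ) + 1) * ((p.2 : ℂ) + 1) * τ)

/-- `D_τ = (1/2πi) ∂/∂τ`. -/
def Dt (φ : ℂ → ℂ → ℂ) : ℂ → ℂ → ℂ :=
  fun τ z => (1 / (2 * (Real.pi : ℂ) * Complex.I)) * deriv (fun t => φ t z) τ

/-- `D_z = (1/2πi) ∂/∂z`. -/
def Dz (φ : ℂ → ℂ → ℂ) : ℂ → ℂ → ℂ :=
  fun τ z => (1 / (2 * (Real.pi : ℂ) * Complex.I)) * deriv (fun w => φ τ w) z

/-- The slash action `φ ↦ φ|_{k,m} γ` for `γ = ((a,b;c,d),(λ,μ)) ∈ Γ^J`. -/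
def slash (k m : ℤ) (a b c d lam mu : ℤ) (φ : ℂ → ℂ → ℂ) (τ z : ℂ) : ℂ :=
  ((c : ℂ) * τ + (d : ℂ)) ^ (-k) *
    e ((m : ℂ) * (-(c : ℂ) * (z + (lam : ℂ) * τ + (mu : ℂ)) ^ 2 / ((c : ℂ) * τ + (d : ℂ)) +
        (lam : ℂ) ^ 2 * τ + 2 * (lam : ℂ) * z)) *
    φ (((a : ℂ) * τ + (b : ℂ)) / ((c : ℂ) * τ + (d : ℂ)))
      ((z + (lam : ℂ) * τ + (mu : ℂ)) / ((c : ℂ) * τ + (d : ℂ)))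

/-- The domain `D' = {(τ,z) : 0 < Im τ, |Im z| < Im τ, e^{2πiz} ≠ 1}`. -/
def D' : Set (ℂ × ℂ) := {p | 0 < p.1.im ∧ |p.2.im| < p.1.im ∧ e p.2 ≠ 1}

/-- The Oberdieck derivative `Oφ = D_τφ - (k/12)E₂φ - J₁D_zφ + mJ₂φ` of weight `k`, index `m`. -/
def Ober (k m : ℕ) (φ : ℂ → ℂ → ℂ) : ℂ → ℂ → ℂ :=
  fun τ z => Dt φ τ z - ((k : ℂ) / 12) * E2 τ * φ τ z - J1 τ z * Dz φ τ z +
    (m : ℂ) * J2 τ z * φ τ z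

/-- The heat operator `L_m = 4m D_τ - D_z²`. -/
def Heat (m : ℕ) (φ : ℂ → ℂ → ℂ) : ℂ → ℂ → ℂ :=
  fun τ z => 4 * (m : ℂ) * Dt φ τ z - Dz (Dz φ) τ z

/-- The modified heat operator `L_{k,m} = L_m - (m(2k-1)/6) E₂`. -/
def HeatE (k m : ℕ) (φ : ℂ → ℂ → ℂ) : ℂ → ℂ → ℂ :=
  fun τ z => Heat m φ τ z - (m : ℂ) * (2 * (k : ℂ) - 1) / 6 * E2 τ * φ τ z

/-- The Jacobi–Serre derivative of weight `k` and index `m`. -/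
def JSerre (k m : ℕ) (φ : ℂ → ℂ → ℂ) : ℂ → ℂ → ℂ :=
  fun τ z => Dt φ τ z - ((k : ℂ) / 12) * E2 τ * φ τ z +
    (1 / (1 - 4 * (m : ℂ))) *
      (Dz (Dz φ) τ z - J1 τ z * Dz φ τ z + (m : ℂ) * J2 τ z * φ τ z -
        ((m : ℂ) / 6) * E2 τ * φ τ z)

/-- The error function `erf a = (2/√π) ∫₀^a e^{-t²} dt`. -/
def erf (a : ℝ) : ℝ := 2 / Real.sqrt Real.pi * ∫ t in (0 : ℝ)..a, Real.exp (-t ^ 2)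

/-- Euler's integral for `₂F₁(1/2, k+1; 3/2; x)`:
`F_k(x) = (1/2) ∫₀¹ t^{-1/2} (1 - xt)^{-(k+1)} dt`. -/
def Fk (k x : ℝ) : ℝ := (1 / 2) * ∫ t in (0 : ℝ)..1, t ^ (-(1 : ℝ) / 2) * (1 - x * t) ^ (-(k + 1))

/-- The integration region `(u,v,x,y) ∈ [0,1] × (0,∞) × [0,1] × ℝ`. -/
def Reg : Set (ℝ × ℝ × ℝ × ℝ) := Icc 0 1 ×ˢ Ioi 0 ×ˢ Icc 0 1 ×ˢ univ

/-- The Fourier series `φ(τ,z) = ∑_{n,r} c(n,r) q^n ζ^r`. -/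
def phiF (c : ℕ → ℤ → ℂ) (τ z : ℂ) : ℂ :=
  ∑' p : ℕ × ℤ, c p.1 p.2 * e ((p.1 : ℂ) * τ + (p.2 : ℂ) * z)

private lemma erf_sqrt (B v : ℝ) (hB : 0 < B) (hv : 0 < v) :
    erf (Real.sqrt (B * v)) =
      Real.sqrt B * Real.sqrt v * (2 / Real.sqrt Real.pi) *
        ∫ s in (0:ℝ)..1, Real.exp (-(B * v * s ^ 2)) := by
  have hBv : 0 ≤ B * v := by positivity
  have h1 : (∫ t in (0:ℝ)..Real.sqrt (B*v), Real.exp (-t^2))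
      = Real.sqrt (B*v) • ∫ s in (0:ℝ)..1, Real.exp (-(Real.sqrt (B*v) * s)^2) := by
    rw [intervalIntegral.smul_integral_comp_mul_left (fun t => Real.exp (-t^2)) (Real.sqrt (B*v))]
    norm_num
  have h2 : ∀ s : ℝ, (Real.sqrt (B*v) * s)^2 = B * v * s^2 := by
    intro s; rw [mul_pow, Real.sq_sqrt hBv]
  simp_rw [erf, h1, h2, Real.sqrt_mul hB.le, smul_eq_mul]
  ring

private lemma gamma_int (k c : ℝ) (hk : -1 < k) (hc : 0 < c) :
    ∫ v in Ioi (0:ℝ), v ^ k * Real.exp (-(c * v)) = (1/c)^(k+1) * Real.Gamma (k+1) := by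
  have := Real.integral_rpow_mul_exp_neg_mul_Ioi (a := k+1) (r := c) (by linarith) hc
  simpa using this

private lemma gamma_integrable (k c : ℝ) (hk : -1 < k) (hc : 0 < c) :
    IntegrableOn (fun v => v ^ k * Real.exp (-(c * v))) (Ioi (0:ℝ)) := by
  have := integrableOn_rpow_mul_exp_neg_mul_rpow hk zero_lt_one hc (s := k)
  simpa [neg_mul] using this

private lemma swap_lemma (k A B : ℝ) (hk : -1 < k) (hA : 0 < A) (hB : 0 < B) :
    ∫ v in Ioi (0:ℝ), ∫ s in Ioc (0:ℝ) 1, v^k * Real.exp (-((A + B*s^2)*v))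
      = ∫ s in Ioc (0:ℝ) 1, ∫ v in Ioi (0:ℝ), v^k * Real.exp (-((A + B*s^2)*v)) := by
  apply MeasureTheory.integral_integral_swap
  have hmeas : AEStronglyMeasurable
      (Function.uncurry fun v s => v^k * Real.exp (-((A + B*s^2)*v)))
      ((volume.restrict (Ioi (0:ℝ))).prod (volume.restrict (Ioc (0:ℝ) 1))) := by
    apply Measurable.aestronglyMeasurable
    exact (measurable_fst.pow_const _).mul
      (((measurable_const.add ((measurable_snd.pow_const 2).const_mul B)).mul
        measurable_fst).neg.exp)
  rw [MeasureTheory.integrable_prod_iff hmeas]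
  constructor
  · filter_upwards with v
    have : Continuous fun s : ℝ => v^k * Real.exp (-((A + B*s^2)*v)) :=
      continuous_const.mul (by fun_prop)
    exact this.integrableOn_Ioc
  · apply MeasureTheory.Integrable.mono' (gamma_integrable k A hk hA)
    · exact hmeas.norm.integral_prod_right'
    · filter_upwards [MeasureTheory.ae_restrict_mem measurableSet_Ioi] with v hv
      have hv' : (0:ℝ) < v := hv
      have h1 : ∀ s ∈ Ioc (0:ℝ) 1,
          ‖‖v^k * Real.exp (-((A + B*s^2)*v))‖‖ ≤ v^k * Real.exp (-(A*v)) := by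
        intro s hs
        rw [norm_norm, norm_mul, Real.norm_eq_abs, Real.norm_eq_abs,
          _root_.abs_of_nonneg (Real.rpow_nonneg hv'.le k), _root_.abs_of_nonneg (Real.exp_pos _).le]
        apply mul_le_mul_of_nonneg_left _ (Real.rpow_nonneg hv'.le k)
        apply Real.exp_le_exp.2
        have hs0 : 0 < s := hs.1
        have : 0 ≤ B * s^2 * v := by positivity
        nlinarith
      calc ‖∫ s in Ioc (0:ℝ) 1, ‖v^k * Real.exp (-((A + B*s^2)*v))‖‖
          ≤ (v^k * Real.exp (-(A*v))) * (volume (Ioc (0:ℝ) 1)).toReal := by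
            apply MeasureTheory.norm_setIntegral_le_of_norm_le_const_ae'
            · simp
            · filter_upwards with s hs; exact h1 s hs
        _ = v^k * Real.exp (-(A*v)) := by simp

set_option maxHeartbeats 1000000 in
private
lemma Fk_eq (k c : ℝ) (hk : -1 < k) (hc : 0 < c) :
    Fk k (-c) = ∫ s in (0:ℝ)..1, (1 + c * s^2) ^ (-(k+1)) := by
  have hrpow_inv : ∀ x : ℝ, 0 < x → ((x:ℝ)^2) ^ (-(1:ℝ)/2) = x⁻¹ := by
    intro x hx0
    rw [← Real.rpow_natCast x 2, ← Real.rpow_mul hx0.le]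
    norm_num
    exact Real.rpow_neg_one x
  have hint : IntegrableOn (fun t : ℝ => t ^ (-(1:ℝ)/2) * (1 + c * t) ^ (-(k+1))) (Icc (0:ℝ) 1) := by
    rw [← Set.uIcc_of_le (zero_le_one' ℝ), ← intervalIntegrable_iff']
    apply IntervalIntegrable.mono_fun
      (intervalIntegral.intervalIntegrable_rpow' (r := (-(1:ℝ)/2)) (by norm_num))
    · apply Measurable.aestronglyMeasurable
      exact (measurable_id.pow_const _).mul
        ((measurable_const.add (measurable_id.const_mul c)).pow_const _)
    · rw [Filter.EventuallyLE, ae_restrict_iff' measurableSet_uIoc]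
      filter_upwards with t ht
      rw [Set.uIoc_of_le (zero_le_one' ℝ)] at ht
      have h1c : (0:ℝ) ≤ 1 + c * t := by nlinarith [ht.1]
      have h1 : (1 + c * t) ^ (-(k+1)) ≤ 1 :=
        Real.rpow_le_one_of_one_le_of_nonpos (by nlinarith [ht.1]) (by linarith)
      simp only [Real.norm_eq_abs, abs_mul]
      rw [_root_.abs_of_nonneg (Real.rpow_nonneg ht.1.le _), _root_.abs_of_nonneg (Real.rpow_nonneg h1c _)]
      calc t ^ (-(1:ℝ)/2) * (1 + c * t) ^ (-(k+1))
          ≤ t ^ (-(1:ℝ)/2) * 1 :=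
            mul_le_mul_of_nonneg_left h1 (Real.rpow_nonneg ht.1.le _)
        _ = t ^ (-(1:ℝ)/2) := mul_one _
  have hsub := intervalIntegral.integral_comp_smul_deriv''' (a := (0:ℝ)) (b := 1)
    (f := fun s => s^2) (f' := fun s => 2*s)
    (g := fun t => t ^ (-(1:ℝ)/2) * (1 + c * t) ^ (-(k+1)))
    (by fun_prop)
    (by
      intro x hx
      have := (hasDerivAt_pow 2 x).hasDerivWithinAt (s := Ioi x)
      simpa using this)
    (by
      have him : ((fun s : ℝ => s^2) '' Ioo (min 0 1) (max 0 1)) ⊆ Ioi (0:ℝ) := by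
        rintro _ ⟨x, hx, rfl⟩
        simp only [min_self, zero_lt_one, min_eq_left, zero_le_one, max_eq_right] at hx
        have : (0:ℝ) < x := by simpa using hx.1
        exact pow_pos this 2
      apply ContinuousOn.mono _ him
      apply ContinuousOn.mul
      · exact fun x hx => (Real.continuousAt_rpow_const x _ (Or.inl (ne_of_gt hx))).continuousWithinAt
      · intro x hx
        apply ContinuousWithinAt.rpow_const
        · exact (continuous_const.add (continuous_const.mul continuous_id)).continuousWithinAt
        · left; have hx0 : (0:ℝ) < x := hx; nlinarith
    )
    (by
      apply hint.mono_set
      rintro _ ⟨x, hx, rfl⟩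
      rw [Set.uIcc_of_le (zero_le_one' ℝ)] at hx
      simp only [Set.mem_Icc] at hx ⊢
      constructor
      · positivity
      · nlinarith [hx.1, hx.2])
    (by
      rw [Set.uIcc_of_le (zero_le_one' ℝ), integrableOn_Icc_iff_integrableOn_Ioc]
      apply MeasureTheory.IntegrableOn.congr_fun
        (f := fun x : ℝ => 2 * ((1 + c * x^2) ^ (-(k+1))))
      · apply Continuous.integrableOn_Ioc
        apply continuous_const.mul
        apply Continuous.rpow_const (by fun_prop)
        intro x
        exact Or.inl (by positivity)
      · intro x hx
        have hx0 : (0:ℝ) < x := hx.1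
        simp only [smul_eq_mul, Function.comp]
        rw [hrpow_inv x hx0]
        field_simp
      · exact measurableSet_Ioc)
  simp only [Function.comp_apply, smul_eq_mul] at hsub
  rw [show ((0:ℝ)^2) = 0 by norm_num, show ((1:ℝ)^2) = 1 by norm_num] at hsub
  rw [Fk]
  have hrw : (fun t : ℝ => t ^ (-(1:ℝ)/2) * (1 - (-c) * t) ^ (-(k+1)))
      = fun t : ℝ => t ^ (-(1:ℝ)/2) * (1 + c * t) ^ (-(k+1)) := by
    funext t; rw [show (1 - (-c) * t) = 1 + c * t by ring]
  rw [intervalIntegral.integral_congr (g := fun t : ℝ => t ^ (-(1:ℝ)/2) * (1 + c * t) ^ (-(k+1)))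
    (fun t _ => by simp only; rw [show (1 - (-c) * t) = 1 + c * t by ring])]
  rw [← hsub]
  have heq : (∫ x in (0:ℝ)..1, 2 * x * ((x^2) ^ (-(1:ℝ)/2) * (1 + c * x^2) ^ (-(k+1))))
      = ∫ x in (0:ℝ)..1, 2 * ((1 + c * x^2) ^ (-(k+1))) := by
    apply intervalIntegral.integral_congr_ae
    rw [Set.uIoc_of_le (zero_le_one' ℝ)]
    filter_upwards with x hx
    have hx0 : (0:ℝ) < x := hx.1
    rw [hrpow_inv x hx0]
    field_simp
  rw [heq, intervalIntegral.integral_const_mul]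
  ring

/-- `∫₀^∞ v^{k-1/2} e^{-4πvM} erf(√(πv/m)) dv
  = (2/√m) (Γ(k+1)/(4πM)^{k+1}) ₂F₁(1/2, k+1; 3/2; -1/(4mM))`. -/
theorem statement5 (k : ℝ) (hk : -1 < k) (m M : ℝ) (hm : 0 < m) (hM : 0 < M) :
    ∫ v in Ioi (0 : ℝ),
        v ^ (k - 1 / 2) * Real.exp (-(4 * Real.pi * v * M)) * erf (Real.sqrt (Real.pi * v / m))
      = 2 / Real.sqrt m * (Real.Gamma (k + 1) / (4 * Real.pi * M) ^ (k + 1)) *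
        Fk k (-1 / (4 * m * M)) := by
  have hπ := Real.pi_pos
  set A := 4 * Real.pi * M with hA'
  have hA : 0 < A := by positivity
  set B := Real.pi / m with hB'
  have hB : 0 < B := by positivity
  set c := 1 / (4 * m * M) with hc'
  have hc : 0 < c := by positivity
  have hBA : B = c * A := by
    rw [hB', hc', hA']; field_simp
  have hsm : Real.sqrt m ≠ 0 := ne_of_gt (Real.sqrt_pos.2 hm)
  have hsπ : Real.sqrt Real.pi ≠ 0 := ne_of_gt (Real.sqrt_pos.2 hπ)
  -- Step 1: pointwise rewrite of the integrand
  have step1 : EqOn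
      (fun v : ℝ => v ^ (k - 1/2) * Real.exp (-(4 * Real.pi * v * M)) *
        erf (Real.sqrt (Real.pi * v / m)))
      (fun v : ℝ => (2 / Real.sqrt m) *
        ∫ s in Ioc (0:ℝ) 1, v ^ k * Real.exp (-((A + B * s^2) * v)))
      (Ioi (0:ℝ)) := by
    intro v hv
    have hv' : (0:ℝ) < v := hv
    have harg : Real.pi * v / m = B * v := by rw [hB']; ring
    have hR : (∫ s in Ioc (0:ℝ) 1, v ^ k * Real.exp (-((A + B * s^2) * v)))
        = (v ^ k * Real.exp (-(A * v))) * ∫ s in (0:ℝ)..1, Real.exp (-(B * v * s^2)) := by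
      rw [← intervalIntegral.integral_of_le zero_le_one, ← intervalIntegral.integral_const_mul]
      apply intervalIntegral.integral_congr
      intro s _
      simp only
      rw [mul_assoc, ← Real.exp_add, show -(A*v) + -(B*v*s^2) = -((A + B*s^2)*v) by ring]
    have h2 : v ^ (k - 1/2) * Real.sqrt v = v ^ k := by
      rw [Real.sqrt_eq_rpow, ← Real.rpow_add hv']
      norm_num
    have h3 : Real.sqrt B * (2 / Real.sqrt Real.pi) = 2 / Real.sqrt m := by
      rw [hB', Real.sqrt_div hπ.le]
      field_simp
    have hexp : Real.exp (-(4 * Real.pi * v * M)) = Real.exp (-(A * v)) := by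
      rw [hA']; ring_nf
    simp only
    rw [harg, erf_sqrt B v hB hv', hR, hexp, ← h2, ← h3]
    ring
  rw [MeasureTheory.setIntegral_congr_fun measurableSet_Ioi step1,
    MeasureTheory.integral_const_mul, swap_lemma k A B hk hA hB]
  -- inner Gamma integral
  have inner : EqOn
      (fun s : ℝ => ∫ v in Ioi (0:ℝ), v ^ k * Real.exp (-((A + B * s^2) * v)))
      (fun s : ℝ => (Real.Gamma (k+1) * A ^ (-(k+1))) * (1 + c * s^2) ^ (-(k+1)))
      (Ioc (0:ℝ) 1) := by
    intro s _
    have hABs : (0:ℝ) < A + B * s^2 := by positivity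
    simp only
    rw [gamma_int k (A + B * s^2) hk hABs, one_div, Real.inv_rpow hABs.le,
      ← Real.rpow_neg hABs.le]
    rw [show A + B * s^2 = A * (1 + c * s^2) by rw [hBA]; ring]
    rw [Real.mul_rpow hA.le (by positivity)]
    ring
  rw [MeasureTheory.setIntegral_congr_fun measurableSet_Ioc inner,
    MeasureTheory.integral_const_mul]
  rw [show (-1 / (4 * m * M)) = -c by rw [hc']; ring, Fk_eq k c hk hc,
    intervalIntegral.integral_of_le zero_le_one]
  rw [Real.rpow_neg hA.le, div_eq_mul_inv]
  ring
end
end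

section
/- Let k, m be positive integers, ℓ ≥ 1 an integer and w an integer. Then for every (τ,z) ∈ D', (D_τ − (k/12)E₂ − J₁D_z + mJ₂)(q^ℓζ^w)(τ,z) = (ℓ − k/12 + w/2 + m/6) q^ℓζ^w + 2k ∑_{p≥1} σ₁(p) q^{ℓ+p}ζ^w − w q^ℓ ζ^{w+1}/(ζ−1) + w ∑_{p≥1} ( ∑_{d | p} (ζ^{d+w} − ζ^{−d+w}) ) q^{ℓ+p} − 2m ∑_{p≥1} ( ∑_{d | p} (p/d)(ζ^{d+w} + ζ^{−d+w}) ) q^{ℓ+p}, all series converging absolutely on D'. -/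
noncomputable section

open Complex MeasureTheory Set
open scoped ComplexConjugate

/-- `p`-th term of the series `2k ∑_{p≥1} σ₁(p) q^{ℓ+p} ζ^w` (without the factor `2k`). -/
def t2 (ℓ : ℕ) (w : ℤ) (τ z : ℂ) (p : ℕ) : ℂ :=
  (sigma1 (p + 1) : ℂ) * e ((((ℓ : ℂ) + (p : ℂ) + 1)) * τ + (w : ℂ) * z)

/-- `p`-th term of the series `∑_{p≥1} (∑_{d∣p} (ζ^{d+w} - ζ^{-d+w})) q^{ℓ+p}`. -/
def t4 (ℓ : ℕ) (w : ℤ) (τ z : ℂ) (p : ℕ) : ℂ :=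
  (∑ d ∈ (p + 1).divisors, (e (((d : ℂ) + (w : ℂ)) * z) - e (((w : ℂ) - (d : ℂ)) * z))) *
    e (((ℓ : ℂ) + (p : ℂ) + 1) * τ)

/-- `p`-th term of the series `∑_{p≥1} (∑_{d∣p} (p/d)(ζ^{d+w} + ζ^{-d+w})) q^{ℓ+p}`. -/
def t5 (ℓ : ℕ) (w : ℤ) (τ z : ℂ) (p : ℕ) : ℂ :=
  (∑ d ∈ (p + 1).divisors, (((p + 1) / d : ℕ) : ℂ) *
      (e (((d : ℂ) + (w : ℂ)) * z) + e (((w : ℂ) - (d : ℂ)) * z))) *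
    e (((ℓ : ℂ) + (p : ℂ) + 1) * τ)

/-! ### Auxiliary lemmas -/

lemma e_add (x y : ℂ) : e (x + y) = e x * e y := by
  simp only [e, ← Complex.exp_add]; ring_nf

lemma e_mul_e (x y : ℂ) : e x * e y = e (x + y) := (e_add x y).symm

lemma norm_e (x : ℂ) : ‖e x‖ = Real.exp (-(2 * Real.pi * x.im)) := by
  rw [e, Complex.norm_exp]
  congr 1
  simp [Complex.mul_re, Complex.mul_im]

lemma norm_e_le {x : ℂ} {b : ℝ} (h : -x.im ≤ b) : ‖e x‖ ≤ Real.exp (2 * Real.pi * b) := by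
  rw [norm_e]
  apply Real.exp_le_exp.mpr
  have hπ : (0:ℝ) < Real.pi := Real.pi_pos
  nlinarith

lemma hasDerivAt_e (c b t : ℂ) :
    HasDerivAt (fun t : ℂ => e (c * t + b)) (2 * (Real.pi : ℂ) * Complex.I * c * e (c * t + b)) t := by
  have h1 : HasDerivAt (fun t : ℂ => 2 * (Real.pi : ℂ) * Complex.I * (c * t + b))
      (2 * (Real.pi : ℂ) * Complex.I * c) t := by
    simpa using (((hasDerivAt_id t).const_mul c).add_const b).const_mul
      (2 * (Real.pi : ℂ) * Complex.I)
  simpa [e, mul_comm] using h1.cexp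

lemma norm_e_dw (d : ℕ) (w : ℤ) (z : ℂ) (B : ℝ) (hB : (d:ℝ) ≤ B) :
    ‖e (((d:ℂ) + (w:ℂ)) * z)‖ ≤ Real.exp (2*Real.pi*((B + |(w:ℝ)|) * |z.im|)) := by
  apply norm_e_le
  have h1 : (((d:ℂ) + (w:ℂ)) * z).im = ((d:ℝ) + (w:ℝ)) * z.im := by
    simp [Complex.mul_im]
  rw [h1]
  nlinarith [neg_abs_le (((d:ℝ) + (w:ℝ)) * z.im), abs_mul ((d:ℝ) + (w:ℝ)) z.im,
    abs_add_le (d:ℝ) (w:ℝ), abs_nonneg z.im, Nat.abs_cast (R := ℝ) d]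

lemma norm_e_wd (d : ℕ) (w : ℤ) (z : ℂ) (B : ℝ) (hB : (d:ℝ) ≤ B) :
    ‖e (((w:ℂ) - (d:ℂ)) * z)‖ ≤ Real.exp (2*Real.pi*((B + |(w:ℝ)|) * |z.im|)) := by
  apply norm_e_le
  have h1 : (((w:ℂ) - (d:ℂ)) * z).im = ((w:ℝ) - (d:ℝ)) * z.im := by
    simp [Complex.mul_im]
  rw [h1]
  nlinarith [neg_abs_le (((w:ℝ) - (d:ℝ)) * z.im), abs_mul ((w:ℝ) - (d:ℝ)) z.im,
    abs_sub (w:ℝ) (d:ℝ), abs_nonneg z.im, Nat.abs_cast (R := ℝ) d]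

lemma summable_sq_geom {r : ℝ} (h0 : 0 ≤ r) (h1 : r < 1) :
    Summable fun n : ℕ => ((n : ℝ) + 1) ^ 2 * r ^ n := by
  have hr : ‖r‖ < 1 := by rwa [Real.norm_eq_abs, _root_.abs_of_nonneg h0]
  have h2 := summable_pow_mul_geometric_of_norm_lt_one 2 hr
  have ha := summable_pow_mul_geometric_of_norm_lt_one 1 hr
  have hb := summable_geometric_of_lt_one h0 h1
  apply (h2.add ((ha.mul_left 2).add hb)).congr
  intro n
  ring

lemma summable_lin_geom {r : ℝ} (h0 : 0 ≤ r) (h1 : r < 1) :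
    Summable fun n : ℕ => ((n : ℝ) + 1) * r ^ n := by
  have hr : ‖r‖ < 1 := by rwa [Real.norm_eq_abs, _root_.abs_of_nonneg h0]
  have ha := summable_pow_mul_geometric_of_norm_lt_one 1 hr
  have hb := summable_geometric_of_lt_one h0 h1
  apply (ha.add hb).congr
  intro n
  ring

lemma card_divisors_le (n : ℕ) : n.divisors.card ≤ n := by
  have hsub : n.divisors ⊆ Finset.Ico 1 (n + 1) := by
    intro d hd
    rw [Finset.mem_Ico]
    exact ⟨Nat.pos_of_mem_divisors hd, Nat.lt_succ_of_le (Nat.divisor_le hd)⟩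
  calc n.divisors.card ≤ (Finset.Ico 1 (n + 1)).card := Finset.card_le_card hsub
    _ = n := by simp

lemma sigma1_le (n : ℕ) : sigma1 n ≤ n * n := by
  rw [sigma1]
  calc (∑ d ∈ n.divisors, d) ≤ n.divisors.card * n := by
        apply Finset.sum_le_card_nsmul
        exact fun x hx => Nat.divisor_le hx
    _ ≤ n * n := Nat.mul_le_mul_right n (card_divisors_le n)

lemma pos_of_mem_antidiag {n : ℕ} {y : ℕ × ℕ} (hy : y ∈ (n + 1).divisorsAntidiagonal) :
    0 < y.1 ∧ 0 < y.2 := by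
  obtain ⟨hmul, -⟩ := Nat.mem_divisorsAntidiagonal.mp hy
  constructor
  · apply Nat.pos_of_ne_zero; rintro h; rw [h, zero_mul] at hmul; simp at hmul
  · apply Nat.pos_of_ne_zero; rintro h; rw [h, mul_zero] at hmul; simp at hmul

def divEquiv (n : ℕ) :
    ((fun p : ℕ × ℕ => (p.1 + 1) * (p.2 + 1)) ⁻¹' {n + 1} : Set (ℕ × ℕ)) ≃
      {x // x ∈ (n + 1).divisorsAntidiagonal} where
  toFun x := ⟨(x.1.1 + 1, x.1.2 + 1), by
    rw [Nat.mem_divisorsAntidiagonal]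
    exact ⟨x.2, Nat.succ_ne_zero n⟩⟩
  invFun y := ⟨(y.1.1 - 1, y.1.2 - 1), by
    obtain ⟨h1, h2⟩ := pos_of_mem_antidiag y.2
    obtain ⟨hmul, -⟩ := Nat.mem_divisorsAntidiagonal.mp y.2
    show (y.1.1 - 1 + 1) * (y.1.2 - 1 + 1) ∈ ({n + 1} : Set ℕ)
    have e1 : y.1.1 - 1 + 1 = y.1.1 := by omega
    have e2 : y.1.2 - 1 + 1 = y.1.2 := by omega
    rw [e1, e2]
    exact hmul⟩
  left_inv x := by
    apply Subtype.ext
    simp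
  right_inv y := by
    obtain ⟨h1, h2⟩ := pos_of_mem_antidiag y.2
    apply Subtype.ext
    apply Prod.ext <;> simp <;> omega

lemma tsum_div_rearrange (f : ℕ × ℕ → ℂ)
    (hf : Summable fun p : ℕ × ℕ => f (p.1 + 1, p.2 + 1)) :
    ∑' p : ℕ × ℕ, f (p.1 + 1, p.2 + 1)
      = ∑' n : ℕ, ∑ x ∈ (n + 1).divisorsAntidiagonal, f x := by
  set h : ℕ × ℕ → ℂ := fun p => f (p.1 + 1, p.2 + 1) with hh
  set g : ℕ × ℕ → ℕ := fun p => (p.1 + 1) * (p.2 + 1) with hg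
  have H : HasSum (fun n : ℕ => ∑' x : g ⁻¹' {n}, h x) (∑' p, h p) :=
    hf.hasSum.tsum_fiberwise g
  have h0 : (∑' x : g ⁻¹' {0}, h x) = 0 := by
    have he : g ⁻¹' {0} = ∅ := by ext p; simp [hg]
    rw [he]; exact tsum_empty
  have key : ∀ n : ℕ, (∑' x : g ⁻¹' {n + 1}, h x) = ∑ x ∈ (n + 1).divisorsAntidiagonal, f x := by
    intro n
    have step1 : (∑' x : g ⁻¹' {n + 1}, h x)
        = ∑' y : {x // x ∈ (n + 1).divisorsAntidiagonal}, h ((divEquiv n).symm y) :=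
      ((divEquiv n).symm.tsum_eq fun x => h x).symm
    rw [step1]
    have step2 : ∀ y : {x // x ∈ (n + 1).divisorsAntidiagonal},
        h ((divEquiv n).symm y) = f y.1 := by
      intro y
      obtain ⟨h1, h2⟩ := pos_of_mem_antidiag y.2
      show f (y.1.1 - 1 + 1, y.1.2 - 1 + 1) = f y.1
      have e1 : y.1.1 - 1 + 1 = y.1.1 := by omega
      have e2 : y.1.2 - 1 + 1 = y.1.2 := by omega
      rw [e1, e2]
    rw [tsum_congr step2]
    exact Finset.tsum_subtype _ f
  rw [← H.tsum_eq, Summable.tsum_eq_zero_add H.summable, h0, zero_add]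
  exact tsum_congr key

/-- Auxiliary function for the `J₁` double sum. -/
def F4aux (ℓ : ℕ) (w : ℤ) (τ z : ℂ) (x : ℕ × ℕ) : ℂ :=
  (e (((x.1:ℂ) + (w:ℂ)) * z) - e (((w:ℂ) - (x.1:ℂ)) * z)) * e (((x.1 * x.2 + ℓ : ℕ) : ℂ) * τ)

/-- Auxiliary function for the `J₂` double sum. -/
def F5aux (ℓ : ℕ) (w : ℤ) (τ z : ℂ) (x : ℕ × ℕ) : ℂ :=
  ((x.2 : ℂ)) * (e (((x.1:ℂ) + (w:ℂ)) * z) + e (((w:ℂ) - (x.1:ℂ)) * z)) *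
    e (((x.1 * x.2 + ℓ : ℕ) : ℂ) * τ)


set_option maxHeartbeats 2000000

/-- expansion of the Oberdieck derivative of a monomial on `D'`,
all series converging absolutely. -/
theorem statement13 (k m : ℕ) (hk : 0 < k) (hm : 0 < m) (ℓ : ℕ) (hl : 1 ≤ ℓ) (w : ℤ)
    (τ z : ℂ) (hmem : (τ, z) ∈ D') :
    Summable (fun p : ℕ => ‖t2 ℓ w τ z p‖) ∧
    Summable (fun p : ℕ => ‖t4 ℓ w τ z p‖) ∧
    Summable (fun p : ℕ => ‖t5 ℓ w τ z p‖) ∧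
    Ober k m (Qmon ℓ w) τ z =
      ((ℓ : ℂ) - (k : ℂ) / 12 + (w : ℂ) / 2 + (m : ℂ) / 6) * Qmon ℓ w τ z
        + 2 * (k : ℂ) * ∑' p : ℕ, t2 ℓ w τ z p
        - (w : ℂ) * (e ((ℓ : ℂ) * τ) * e (((w : ℂ) + 1) * z) / (e z - 1))
        + (w : ℂ) * ∑' p : ℕ, t4 ℓ w τ z p
        - 2 * (m : ℂ) * ∑' p : ℕ, t5 ℓ w τ z p := by
  have hT : 0 < τ.im := hmem.1
  have hsz : |z.im| < τ.im := hmem.2.1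
  have hπ : (0:ℝ) < Real.pi := Real.pi_pos
  set T := τ.im with hTdef
  set s := |z.im| with hsdef
  have hs0 : 0 ≤ s := abs_nonneg _
  set r := Real.exp (-(2*Real.pi*T)) with hrdef
  set ρ := Real.exp (-(2*Real.pi*(T - s))) with hρdef
  have hr0 : 0 ≤ r := (Real.exp_pos _).le
  have hρ0 : 0 ≤ ρ := (Real.exp_pos _).le
  have hr1 : r < 1 := by
    rw [hrdef, ← Real.exp_zero]
    apply Real.exp_lt_exp.mpr
    nlinarith
  have hρ1 : ρ < 1 := by
    rw [hρdef, ← Real.exp_zero]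
    apply Real.exp_lt_exp.mpr
    nlinarith
  set K := 2 * Real.exp (2*Real.pi*(|(w:ℝ)| * s)) with hKdef
  have hK0 : 0 ≤ K := by positivity
  -- summability of t2
  have hS2 : Summable (fun p : ℕ => ‖t2 ℓ w τ z p‖) := by
    set C := Real.exp (-(2*Real.pi*(((ℓ:ℝ)+1)*T + (w:ℝ)*z.im))) with hCdef
    have hC0 : 0 ≤ C := (Real.exp_pos _).le
    apply Summable.of_nonneg_of_le (fun _ => norm_nonneg _) ?_
      ((summable_sq_geom hr0 hr1).mul_left C)
    intro p
    rw [t2, norm_mul, norm_e]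
    have him : ((((ℓ:ℂ) + (p:ℂ) + 1)) * τ + (w:ℂ) * z).im = ((ℓ:ℝ)+(p:ℝ)+1)*T + (w:ℝ)*z.im := by
      simp [Complex.add_im, Complex.mul_im, hTdef]
    rw [him]
    have hnorm : ‖((sigma1 (p+1) : ℕ) : ℂ)‖ = ((sigma1 (p+1) : ℕ) : ℝ) := by simp
    rw [hnorm]
    have hexp : Real.exp (-(2*Real.pi*(((ℓ:ℝ)+(p:ℝ)+1)*T + (w:ℝ)*z.im))) = C * r ^ p := by
      rw [hCdef, hrdef, ← Real.exp_nat_mul, ← Real.exp_add]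
      congr 1
      ring
    rw [hexp]
    have h3 : ((sigma1 (p+1) : ℕ) : ℝ) ≤ ((p:ℝ)+1)^2 := by
      have h := sigma1_le (p+1)
      have h' : ((sigma1 (p+1) : ℕ) : ℝ) ≤ (((p+1)*(p+1) : ℕ) : ℝ) := Nat.cast_le.mpr h
      push_cast at h'
      nlinarith
    calc ((sigma1 (p+1) : ℕ):ℝ) * (C * r^p) ≤ ((p:ℝ)+1)^2 * (C*r^p) := by
          apply mul_le_mul_of_nonneg_right h3
          positivity
      _ = C * (((p:ℝ)+1)^2 * r^p) := by ring
  -- shared exponential estimate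
  have hexp2 : ∀ n : ℕ, Real.exp (2*Real.pi*((((n:ℝ)+1) + |(w:ℝ)|) * s)) *
      Real.exp (-(2*Real.pi*(((ℓ:ℝ)+(n:ℝ)+1)*T)))
      ≤ Real.exp (2*Real.pi*(|(w:ℝ)| * s)) * ρ^(n+1) := by
    intro n
    rw [hρdef, ← Real.exp_nat_mul, ← Real.exp_add, ← Real.exp_add]
    apply Real.exp_le_exp.mpr
    push_cast
    have hl0 : (0:ℝ) ≤ (ℓ:ℝ) := Nat.cast_nonneg _
    nlinarith [mul_nonneg (mul_nonneg hπ.le hl0) hT.le]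
  -- summability of t4
  have hbt4 : ∀ n : ℕ, ‖t4 ℓ w τ z n‖ ≤ K * (((n:ℝ)+1) * ρ^(n+1)) := by
    intro n
    rw [t4, norm_mul]
    set E := Real.exp (2*Real.pi*((((n:ℝ)+1) + |(w:ℝ)|) * s)) with hEdef
    have hterm : ∀ d ∈ (n+1).divisors,
        ‖e (((d:ℂ)+(w:ℂ))*z) - e (((w:ℂ)-(d:ℂ))*z)‖ ≤ 2 * E := by
      intro d hd
      have hdle : (d:ℝ) ≤ (n:ℝ)+1 := by exact_mod_cast Nat.divisor_le hd
      calc ‖e (((d:ℂ)+(w:ℂ))*z) - e (((w:ℂ)-(d:ℂ))*z)‖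
          ≤ ‖e (((d:ℂ)+(w:ℂ))*z)‖ + ‖e (((w:ℂ)-(d:ℂ))*z)‖ := norm_sub_le _ _
        _ ≤ E + E := add_le_add (norm_e_dw d w z ((n:ℝ)+1) hdle) (norm_e_wd d w z ((n:ℝ)+1) hdle)
        _ = 2*E := by ring
    have hsum : ‖∑ d ∈ (n+1).divisors, (e (((d:ℂ)+(w:ℂ))*z) - e (((w:ℂ)-(d:ℂ))*z))‖
        ≤ ((n:ℝ)+1) * (2*E) := by
      calc ‖∑ d ∈ (n+1).divisors, (e (((d:ℂ)+(w:ℂ))*z) - e (((w:ℂ)-(d:ℂ))*z))‖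
          ≤ ∑ d ∈ (n+1).divisors, ‖e (((d:ℂ)+(w:ℂ))*z) - e (((w:ℂ)-(d:ℂ))*z)‖ :=
            norm_sum_le _ _
        _ ≤ (n+1).divisors.card • (2*E) := Finset.sum_le_card_nsmul _ _ _ hterm
        _ = ((n+1).divisors.card : ℝ) * (2*E) := nsmul_eq_mul _ _
        _ ≤ ((n:ℝ)+1) * (2*E) := by
            apply mul_le_mul_of_nonneg_right _ (by positivity)
            have := card_divisors_le (n+1)
            exact_mod_cast this
    have him : (((ℓ:ℂ) + (n:ℂ) + 1) * τ).im = ((ℓ:ℝ)+(n:ℝ)+1)*T := by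
      simp [Complex.mul_im, hTdef]
    have htau : ‖e (((ℓ:ℂ) + (n:ℂ) + 1) * τ)‖ = Real.exp (-(2*Real.pi*(((ℓ:ℝ)+(n:ℝ)+1)*T))) := by
      rw [norm_e, him]
    rw [htau]
    calc ‖∑ d ∈ (n+1).divisors, (e (((d:ℂ)+(w:ℂ))*z) - e (((w:ℂ)-(d:ℂ))*z))‖ *
          Real.exp (-(2*Real.pi*(((ℓ:ℝ)+(n:ℝ)+1)*T)))
        ≤ (((n:ℝ)+1) * (2*E)) * Real.exp (-(2*Real.pi*(((ℓ:ℝ)+(n:ℝ)+1)*T))) :=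
          mul_le_mul_of_nonneg_right hsum (Real.exp_pos _).le
      _ = (((n:ℝ)+1) * 2) * (E * Real.exp (-(2*Real.pi*(((ℓ:ℝ)+(n:ℝ)+1)*T)))) := by ring
      _ ≤ (((n:ℝ)+1) * 2) * (Real.exp (2*Real.pi*(|(w:ℝ)| * s)) * ρ^(n+1)) := by
          apply mul_le_mul_of_nonneg_left (hexp2 n)
          positivity
      _ = K * (((n:ℝ)+1) * ρ^(n+1)) := by rw [hKdef]; ring
  have hS4 : Summable (fun p : ℕ => ‖t4 ℓ w τ z p‖) := by
    have hsum : Summable (fun n : ℕ => ((n:ℝ)+1) * ρ^(n+1)) :=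
      ((summable_lin_geom hρ0 hρ1).mul_left ρ).congr (fun n => by rw [pow_succ]; ring)
    exact Summable.of_nonneg_of_le (fun _ => norm_nonneg _) hbt4 (hsum.mul_left K)
  -- summability of t5
  have hbt5 : ∀ n : ℕ, ‖t5 ℓ w τ z n‖ ≤ K * (((n:ℝ)+1)^2 * ρ^(n+1)) := by
    intro n
    rw [t5, norm_mul]
    set E := Real.exp (2*Real.pi*((((n:ℝ)+1) + |(w:ℝ)|) * s)) with hEdef
    have hterm : ∀ d ∈ (n+1).divisors,
        ‖((((n+1)/d : ℕ)):ℂ) * (e (((d:ℂ)+(w:ℂ))*z) + e (((w:ℂ)-(d:ℂ))*z))‖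
          ≤ ((n:ℝ)+1) * (2 * E) := by
      intro d hd
      have hdle : (d:ℝ) ≤ (n:ℝ)+1 := by exact_mod_cast Nat.divisor_le hd
      have hdiv : ((((n+1)/d : ℕ)):ℝ) ≤ (n:ℝ)+1 := by
        exact_mod_cast Nat.div_le_self (n+1) d
      rw [norm_mul]
      have hn1 : ‖((((n+1)/d : ℕ)):ℂ)‖ = ((((n+1)/d : ℕ)):ℝ) := by simp
      rw [hn1]
      have h2 : ‖e (((d:ℂ)+(w:ℂ))*z) + e (((w:ℂ)-(d:ℂ))*z)‖ ≤ 2*E := by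
        calc ‖e (((d:ℂ)+(w:ℂ))*z) + e (((w:ℂ)-(d:ℂ))*z)‖
            ≤ ‖e (((d:ℂ)+(w:ℂ))*z)‖ + ‖e (((w:ℂ)-(d:ℂ))*z)‖ := norm_add_le _ _
          _ ≤ E + E := add_le_add (norm_e_dw d w z ((n:ℝ)+1) hdle) (norm_e_wd d w z ((n:ℝ)+1) hdle)
          _ = 2*E := by ring
      exact mul_le_mul hdiv h2 (norm_nonneg _) (by positivity)
    have hsum : ‖∑ d ∈ (n+1).divisors, (((((n+1)/d : ℕ)):ℂ) *
          (e (((d:ℂ)+(w:ℂ))*z) + e (((w:ℂ)-(d:ℂ))*z)))‖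
        ≤ ((n:ℝ)+1) * (((n:ℝ)+1) * (2*E)) := by
      calc ‖∑ d ∈ (n+1).divisors, (((((n+1)/d : ℕ)):ℂ) *
            (e (((d:ℂ)+(w:ℂ))*z) + e (((w:ℂ)-(d:ℂ))*z)))‖
          ≤ ∑ d ∈ (n+1).divisors, ‖((((n+1)/d : ℕ)):ℂ) *
              (e (((d:ℂ)+(w:ℂ))*z) + e (((w:ℂ)-(d:ℂ))*z))‖ := norm_sum_le _ _
        _ ≤ (n+1).divisors.card • (((n:ℝ)+1) * (2*E)) := Finset.sum_le_card_nsmul _ _ _ hterm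
        _ = ((n+1).divisors.card : ℝ) * (((n:ℝ)+1) * (2*E)) := nsmul_eq_mul _ _
        _ ≤ ((n:ℝ)+1) * (((n:ℝ)+1) * (2*E)) := by
            apply mul_le_mul_of_nonneg_right _ (by positivity)
            have := card_divisors_le (n+1)
            exact_mod_cast this
    have him : (((ℓ:ℂ) + (n:ℂ) + 1) * τ).im = ((ℓ:ℝ)+(n:ℝ)+1)*T := by
      simp [Complex.mul_im, hTdef]
    have htau : ‖e (((ℓ:ℂ) + (n:ℂ) + 1) * τ)‖ = Real.exp (-(2*Real.pi*(((ℓ:ℝ)+(n:ℝ)+1)*T))) := by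
      rw [norm_e, him]
    rw [htau]
    calc ‖∑ d ∈ (n+1).divisors, (((((n+1)/d : ℕ)):ℂ) *
            (e (((d:ℂ)+(w:ℂ))*z) + e (((w:ℂ)-(d:ℂ))*z)))‖ *
          Real.exp (-(2*Real.pi*(((ℓ:ℝ)+(n:ℝ)+1)*T)))
        ≤ (((n:ℝ)+1) * (((n:ℝ)+1) * (2*E))) * Real.exp (-(2*Real.pi*(((ℓ:ℝ)+(n:ℝ)+1)*T))) :=
          mul_le_mul_of_nonneg_right hsum (Real.exp_pos _).le
      _ = (((n:ℝ)+1)^2 * 2) * (E * Real.exp (-(2*Real.pi*(((ℓ:ℝ)+(n:ℝ)+1)*T)))) := by ring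
      _ ≤ (((n:ℝ)+1)^2 * 2) * (Real.exp (2*Real.pi*(|(w:ℝ)| * s)) * ρ^(n+1)) := by
          apply mul_le_mul_of_nonneg_left (hexp2 n)
          positivity
      _ = K * (((n:ℝ)+1)^2 * ρ^(n+1)) := by rw [hKdef]; ring
  have hS5 : Summable (fun p : ℕ => ‖t5 ℓ w τ z p‖) := by
    have hsum : Summable (fun n : ℕ => ((n:ℝ)+1)^2 * ρ^(n+1)) :=
      ((summable_sq_geom hρ0 hρ1).mul_left ρ).congr (fun n => by rw [pow_succ]; ring)
    exact Summable.of_nonneg_of_le (fun _ => norm_nonneg _) hbt5 (hsum.mul_left K)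
  refine ⟨hS2, hS4, hS5, ?_⟩
  -- double sum summability for J1
  have hbF4 : ∀ p : ℕ × ℕ, ‖F4aux ℓ w τ z (p.1+1, p.2+1)‖ ≤ K * (ρ^(p.1+1) * r^p.2) := by
    rintro ⟨a, b⟩
    rw [F4aux, norm_mul]
    have hle : (((a+1 : ℕ)):ℝ) ≤ (a:ℝ)+1 := by push_cast; exact le_refl _
    have h1 : ‖e (((((a+1:ℕ)):ℂ)+(w:ℂ))*z) - e (((w:ℂ)-(((a+1:ℕ)):ℂ))*z)‖
        ≤ 2 * Real.exp (2*Real.pi*((((a:ℝ)+1) + |(w:ℝ)|)*s)) := by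
      calc ‖e (((((a+1:ℕ)):ℂ)+(w:ℂ))*z) - e (((w:ℂ)-(((a+1:ℕ)):ℂ))*z)‖
          ≤ ‖e (((((a+1:ℕ)):ℂ)+(w:ℂ))*z)‖ + ‖e (((w:ℂ)-(((a+1:ℕ)):ℂ))*z)‖ := norm_sub_le _ _
        _ ≤ Real.exp (2*Real.pi*((((a:ℝ)+1) + |(w:ℝ)|)*s))
            + Real.exp (2*Real.pi*((((a:ℝ)+1) + |(w:ℝ)|)*s)) :=
            add_le_add (norm_e_dw (a+1) w z ((a:ℝ)+1) hle) (norm_e_wd (a+1) w z ((a:ℝ)+1) hle)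
        _ = 2 * Real.exp (2*Real.pi*((((a:ℝ)+1) + |(w:ℝ)|)*s)) := by ring
    have him : (((((a+1)*(b+1)+ℓ : ℕ)):ℂ) * τ).im = ((((a+1)*(b+1)+ℓ : ℕ)):ℝ) * T := by
      simp [Complex.mul_im, hTdef]
    have h2 : ‖e (((((a+1)*(b+1)+ℓ : ℕ)):ℂ) * τ)‖
        = Real.exp (-(2*Real.pi*(((((a+1)*(b+1)+ℓ : ℕ)):ℝ) * T))) := by
      rw [norm_e, him]
    rw [h2]
    have h3 : Real.exp (2*Real.pi*((((a:ℝ)+1) + |(w:ℝ)|)*s)) *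
        Real.exp (-(2*Real.pi*(((((a+1)*(b+1)+ℓ : ℕ)):ℝ) * T)))
        ≤ Real.exp (2*Real.pi*(|(w:ℝ)| * s)) * (ρ^(a+1) * r^b) := by
      rw [hρdef, hrdef, ← Real.exp_nat_mul, ← Real.exp_nat_mul, ← Real.exp_add,
        ← Real.exp_add, ← Real.exp_add]
      apply Real.exp_le_exp.mpr
      push_cast
      have ha0 : (0:ℝ) ≤ (a:ℝ) := Nat.cast_nonneg _
      have hb0 : (0:ℝ) ≤ (b:ℝ) := Nat.cast_nonneg _
      have hl0 : (0:ℝ) ≤ (ℓ:ℝ) := Nat.cast_nonneg _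
      nlinarith [mul_nonneg (mul_nonneg hπ.le hl0) hT.le,
        mul_nonneg (mul_nonneg hπ.le (mul_nonneg ha0 hb0)) hT.le]
    calc ‖e (((((a+1:ℕ)):ℂ)+(w:ℂ))*z) - e (((w:ℂ)-(((a+1:ℕ)):ℂ))*z)‖ *
          Real.exp (-(2*Real.pi*(((((a+1)*(b+1)+ℓ : ℕ)):ℝ) * T)))
        ≤ (2 * Real.exp (2*Real.pi*((((a:ℝ)+1) + |(w:ℝ)|)*s))) *
          Real.exp (-(2*Real.pi*(((((a+1)*(b+1)+ℓ : ℕ)):ℝ) * T))) :=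
          mul_le_mul_of_nonneg_right h1 (Real.exp_pos _).le
      _ = 2 * (Real.exp (2*Real.pi*((((a:ℝ)+1) + |(w:ℝ)|)*s)) *
          Real.exp (-(2*Real.pi*(((((a+1)*(b+1)+ℓ : ℕ)):ℝ) * T)))) := by ring
      _ ≤ 2 * (Real.exp (2*Real.pi*(|(w:ℝ)| * s)) * (ρ^(a+1) * r^b)) := by
          apply mul_le_mul_of_nonneg_left h3
          norm_num
      _ = K * (ρ^(a+1) * r^b) := by rw [hKdef]; ring
  have hgeomprod : Summable (fun p : ℕ × ℕ => ρ^(p.1+1) * r^p.2) := by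
    have hA : Summable (fun a : ℕ => ρ^(a+1)) :=
      ((summable_geometric_of_lt_one hρ0 hρ1).mul_left ρ).congr (fun a => by rw [pow_succ]; ring)
    exact hA.mul_of_nonneg (summable_geometric_of_lt_one hr0 hr1)
      (fun a => by positivity) (fun b => by positivity)
  have hF4sum : Summable (fun p : ℕ × ℕ => F4aux ℓ w τ z (p.1+1, p.2+1)) := by
    apply Summable.of_norm
    exact Summable.of_nonneg_of_le (fun _ => norm_nonneg _) hbF4 (hgeomprod.mul_left K)
  -- double sum summability for J2
  have hbF5 : ∀ p : ℕ × ℕ, ‖F5aux ℓ w τ z (p.1+1, p.2+1)‖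
      ≤ K * (ρ^(p.1+1) * (((p.2:ℝ)+1) * r^p.2)) := by
    rintro ⟨a, b⟩
    rw [F5aux, norm_mul, norm_mul]
    have hle : (((a+1 : ℕ)):ℝ) ≤ (a:ℝ)+1 := by push_cast; exact le_refl _
    have hco : ‖(((b+1 : ℕ)):ℂ)‖ = (b:ℝ)+1 := by
      rw [Complex.norm_natCast]
      push_cast
      ring
    have h1 : ‖e (((((a+1:ℕ)):ℂ)+(w:ℂ))*z) + e (((w:ℂ)-(((a+1:ℕ)):ℂ))*z)‖
        ≤ 2 * Real.exp (2*Real.pi*((((a:ℝ)+1) + |(w:ℝ)|)*s)) := by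
      calc ‖e (((((a+1:ℕ)):ℂ)+(w:ℂ))*z) + e (((w:ℂ)-(((a+1:ℕ)):ℂ))*z)‖
          ≤ ‖e (((((a+1:ℕ)):ℂ)+(w:ℂ))*z)‖ + ‖e (((w:ℂ)-(((a+1:ℕ)):ℂ))*z)‖ := norm_add_le _ _
        _ ≤ Real.exp (2*Real.pi*((((a:ℝ)+1) + |(w:ℝ)|)*s))
            + Real.exp (2*Real.pi*((((a:ℝ)+1) + |(w:ℝ)|)*s)) :=
            add_le_add (norm_e_dw (a+1) w z ((a:ℝ)+1) hle) (norm_e_wd (a+1) w z ((a:ℝ)+1) hle)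
        _ = 2 * Real.exp (2*Real.pi*((((a:ℝ)+1) + |(w:ℝ)|)*s)) := by ring
    have him : (((((a+1)*(b+1)+ℓ : ℕ)):ℂ) * τ).im = ((((a+1)*(b+1)+ℓ : ℕ)):ℝ) * T := by
      simp [Complex.mul_im, hTdef]
    have h2 : ‖e (((((a+1)*(b+1)+ℓ : ℕ)):ℂ) * τ)‖
        = Real.exp (-(2*Real.pi*(((((a+1)*(b+1)+ℓ : ℕ)):ℝ) * T))) := by
      rw [norm_e, him]
    rw [h2, hco]
    have h3 : Real.exp (2*Real.pi*((((a:ℝ)+1) + |(w:ℝ)|)*s)) *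
        Real.exp (-(2*Real.pi*(((((a+1)*(b+1)+ℓ : ℕ)):ℝ) * T)))
        ≤ Real.exp (2*Real.pi*(|(w:ℝ)| * s)) * (ρ^(a+1) * r^b) := by
      rw [hρdef, hrdef, ← Real.exp_nat_mul, ← Real.exp_nat_mul, ← Real.exp_add,
        ← Real.exp_add, ← Real.exp_add]
      apply Real.exp_le_exp.mpr
      push_cast
      have ha0 : (0:ℝ) ≤ (a:ℝ) := Nat.cast_nonneg _
      have hb0 : (0:ℝ) ≤ (b:ℝ) := Nat.cast_nonneg _
      have hl0 : (0:ℝ) ≤ (ℓ:ℝ) := Nat.cast_nonneg _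
      nlinarith [mul_nonneg (mul_nonneg hπ.le hl0) hT.le,
        mul_nonneg (mul_nonneg hπ.le (mul_nonneg ha0 hb0)) hT.le]
    calc ((b:ℝ)+1) * ‖e (((((a+1:ℕ)):ℂ)+(w:ℂ))*z) + e (((w:ℂ)-(((a+1:ℕ)):ℂ))*z)‖ *
          Real.exp (-(2*Real.pi*(((((a+1)*(b+1)+ℓ : ℕ)):ℝ) * T)))
        ≤ ((b:ℝ)+1) * (2 * Real.exp (2*Real.pi*((((a:ℝ)+1) + |(w:ℝ)|)*s))) *
          Real.exp (-(2*Real.pi*(((((a+1)*(b+1)+ℓ : ℕ)):ℝ) * T))) := by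
          apply mul_le_mul_of_nonneg_right _ (Real.exp_pos _).le
          apply mul_le_mul_of_nonneg_left h1
          positivity
      _ = (((b:ℝ)+1) * 2) * (Real.exp (2*Real.pi*((((a:ℝ)+1) + |(w:ℝ)|)*s)) *
          Real.exp (-(2*Real.pi*(((((a+1)*(b+1)+ℓ : ℕ)):ℝ) * T)))) := by ring
      _ ≤ (((b:ℝ)+1) * 2) * (Real.exp (2*Real.pi*(|(w:ℝ)| * s)) * (ρ^(a+1) * r^b)) := by
          apply mul_le_mul_of_nonneg_left h3
          positivity
      _ = K * (ρ^(a+1) * (((b:ℝ)+1) * r^b)) := by rw [hKdef]; ring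
  have hgeomprod5 : Summable (fun p : ℕ × ℕ => ρ^(p.1+1) * (((p.2:ℝ)+1) * r^p.2)) := by
    have hA : Summable (fun a : ℕ => ρ^(a+1)) :=
      ((summable_geometric_of_lt_one hρ0 hρ1).mul_left ρ).congr (fun a => by rw [pow_succ]; ring)
    exact hA.mul_of_nonneg (summable_lin_geom hr0 hr1)
      (fun a => by positivity) (fun b => by positivity)
  have hF5sum : Summable (fun p : ℕ × ℕ => F5aux ℓ w τ z (p.1+1, p.2+1)) := by
    apply Summable.of_norm
    exact Summable.of_nonneg_of_le (fun _ => norm_nonneg _) hbF5 (hgeomprod5.mul_left K)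
  -- derivatives
  have h2piI : (2 * (Real.pi:ℂ) * Complex.I) ≠ 0 := by
    simp [Complex.ofReal_ne_zero, Real.pi_ne_zero, Complex.I_ne_zero]
  have hDt : Dt (Qmon ℓ w) τ z = (ℓ:ℂ) * Qmon ℓ w τ z := by
    have h1 : (fun t => Qmon ℓ w t z) = fun t => e ((ℓ:ℂ) * t + (w:ℂ) * z) := rfl
    simp only [Dt, h1, (hasDerivAt_e ((ℓ:ℂ)) ((w:ℂ) * z) τ).deriv, Qmon]
    field_simp
  have hDz : Dz (Qmon ℓ w) τ z = (w:ℂ) * Qmon ℓ w τ z := by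
    have h1 : (fun x : ℂ => e ((ℓ:ℂ)*τ + (w:ℂ)*x)) = fun x => e ((w:ℂ) * x + (ℓ:ℂ) * τ) := by
      funext x
      rw [add_comm]
    simp only [Dz, Qmon, h1, (hasDerivAt_e ((w:ℂ)) ((ℓ:ℂ) * τ) z).deriv]
    rw [show (w:ℂ)*z + (ℓ:ℂ)*τ = (ℓ:ℂ)*τ + (w:ℂ)*z from add_comm _ _]
    field_simp
  -- product identities
  have hA : (∑' n : ℕ, (sigma1 (n + 1) : ℂ) * e (((n : ℂ) + 1) * τ)) * Qmon ℓ w τ z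
      = ∑' p : ℕ, t2 ℓ w τ z p := by
    rw [← tsum_mul_right]
    apply tsum_congr
    intro n
    rw [t2, Qmon, mul_assoc, e_mul_e]
    congr 2
    push_cast
    ring
  have hB : e z / (e z - 1) * Qmon ℓ w τ z
      = e ((ℓ:ℂ) * τ) * e (((w:ℂ) + 1) * z) / (e z - 1) := by
    rw [div_mul_eq_mul_div]
    congr 1
    rw [Qmon, e_mul_e, e_mul_e]
    congr 1
    ring
  have hC : (∑' p : ℕ × ℕ, (e (((p.1 : ℂ) + 1) * z) - e (-(((p.1 : ℂ) + 1) * z))) *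
        e (((p.1 : ℂ) + 1) * ((p.2 : ℂ) + 1) * τ)) * Qmon ℓ w τ z
      = ∑' n : ℕ, t4 ℓ w τ z n := by
    rw [← tsum_mul_right]
    have hterm : ∀ p : ℕ × ℕ,
        (e (((p.1 : ℂ) + 1) * z) - e (-(((p.1 : ℂ) + 1) * z))) *
          e (((p.1 : ℂ) + 1) * ((p.2 : ℂ) + 1) * τ) * Qmon ℓ w τ z
        = F4aux ℓ w τ z (p.1 + 1, p.2 + 1) := by
      rintro ⟨a, b⟩
      simp only [F4aux, Qmon, sub_mul, e_mul_e]
      congr 1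
      · congr 1
        push_cast
        ring
      · congr 1
        push_cast
        ring
    rw [tsum_congr hterm, tsum_div_rearrange _ hF4sum]
    apply tsum_congr
    intro n
    rw [t4, Finset.sum_mul]
    rw [show (∑ x ∈ (n+1).divisorsAntidiagonal, F4aux ℓ w τ z x)
        = ∑ i ∈ (n+1).divisorsAntidiagonal, F4aux ℓ w τ z (i.1, i.2) from rfl,
      Nat.sum_divisorsAntidiagonal (fun a b => F4aux ℓ w τ z (a, b))]
    apply Finset.sum_congr rfl
    intro d hd
    obtain ⟨hdvd, -⟩ := Nat.mem_divisors.mp hd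
    rw [F4aux]
    congr 1
    congr 1
    rw [Nat.mul_div_cancel' hdvd]
    push_cast
    ring
  have hD : (∑' p : ℕ × ℕ, ((p.2 : ℂ) + 1) *
        (e (((p.1 : ℂ) + 1) * z) + e (-(((p.1 : ℂ) + 1) * z))) *
        e (((p.1 : ℂ) + 1) * ((p.2 : ℂ) + 1) * τ)) * Qmon ℓ w τ z
      = ∑' n : ℕ, t5 ℓ w τ z n := by
    rw [← tsum_mul_right]
    have hterm : ∀ p : ℕ × ℕ,
        ((p.2 : ℂ) + 1) * (e (((p.1 : ℂ) + 1) * z) + e (-(((p.1 : ℂ) + 1) * z))) *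
          e (((p.1 : ℂ) + 1) * ((p.2 : ℂ) + 1) * τ) * Qmon ℓ w τ z
        = F5aux ℓ w τ z (p.1 + 1, p.2 + 1) := by
      rintro ⟨a, b⟩
      simp only [F5aux, Qmon, mul_add, add_mul, mul_assoc, e_mul_e]
      push_cast
      congr 1
      · congr 2
        ring
      · congr 2
        ring
    rw [tsum_congr hterm, tsum_div_rearrange _ hF5sum]
    apply tsum_congr
    intro n
    rw [t5, Finset.sum_mul]
    rw [show (∑ x ∈ (n+1).divisorsAntidiagonal, F5aux ℓ w τ z x)
        = ∑ i ∈ (n+1).divisorsAntidiagonal, F5aux ℓ w τ z (i.1, i.2) from rfl,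
      Nat.sum_divisorsAntidiagonal (fun a b => F5aux ℓ w τ z (a, b))]
    apply Finset.sum_congr rfl
    intro d hd
    obtain ⟨hdvd, -⟩ := Nat.mem_divisors.mp hd
    rw [F5aux]
    congr 1
    congr 1
    rw [Nat.mul_div_cancel' hdvd]
    push_cast
    ring
  -- assemble
  simp only [Ober, E2, J1, J2]
  rw [hDt, hDz]
  linear_combination (2*(k:ℂ)) * hA - (w:ℂ) * hB + (w:ℂ) * hC - 2*(m:ℂ) * hD
end
end
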